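/- Let A be the 4th-order 2-dimensional real tensor with all entries zero except A_{1111} = 25.1, A_{1212} = 25.6, A_{2121} = 24.8, A_{2222} = 23. Then the set of real Z-eigenvalues of A is exactly {23, 25.1}, with Z-eigenvectors ±(0,1) for 23 and ±(1,0) for 25.1. -/

import Mathlib

/-!
Write `A x³ = (a x³ + b x y², c x² y + d y³)`. At a Z-eigenvector with `x y ≠ 0`, cancelling `x`
and `y` gives `λ = a x² + b y² = c x² + d y²`, i.e. `(a - c) x² = (d - b) y²`, which is impossible
when `(a - c) (d - b) < 0` (here `0.3` and `-2.6`). So every Z-eigenvector lies on a coordinate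
axis, where the equations force `λ = d = 23` or `λ = a = 25.1`.
-/

open Finset

noncomputable def app3 (A : Fin 2 → Fin 2 → Fin 2 → Fin 2 → ℝ) (x : Fin 2 → ℝ) :
    Fin 2 → ℝ :=
  fun j => ∑ a : Fin 2, ∑ b : Fin 2, ∑ c : Fin 2, A j a b c * x a * x b * x c

noncomputable def C0 : Fin 2 → Fin 2 → Fin 2 → Fin 2 → ℝ := fun i j k l =>
  if (i, j, k, l) = (0, 0, 0, 0) then 25.1
  else if (i, j, k, l) = (0, 1, 0, 1) then 25.6
  else if (i, j, k, l) = (1, 0, 1, 0) then 24.8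
  else if (i, j, k, l) = (1, 1, 1, 1) then 23
  else 0

def IsZEigenpair (A : Fin 2 → Fin 2 → Fin 2 → Fin 2 → ℝ) (lam : ℝ) (u : Fin 2 → ℝ) : Prop :=
  u 0 ^ 2 + u 1 ^ 2 = 1 ∧ ∀ j, app3 A u j = lam * u j

lemma app3_C0 (u : Fin 2 → ℝ) :
    app3 C0 u = ![25.1 * u 0 ^ 3 + 25.6 * u 0 * u 1 ^ 2, 24.8 * u 0 ^ 2 * u 1 + 23 * u 1 ^ 3] := by
  ext j
  fin_cases j <;> simp [app3, C0, Fin.sum_univ_two] <;> ring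

lemma fin_two_eq_vec_iff {α : Type*} (u : Fin 2 → α) (p q : α) :
    u = ![p, q] ↔ u 0 = p ∧ u 1 = q := by
  simp [funext_iff, Fin.forall_fin_two]

section BinaryEigenEquations

variable {a b c d lam x y : ℝ}

lemma eq_zero_or_eq_zero_of_eigen (habcd : (a - c) * (d - b) < 0)
    (h₀ : a * x ^ 3 + b * x * y ^ 2 = lam * x) (h₁ : c * x ^ 2 * y + d * y ^ 3 = lam * y) :
    x = 0 ∨ y = 0 := by
  by_contra! hxy
  obtain ⟨hx, hy⟩ := hxy
  have hlam₀ : lam = a * x ^ 2 + b * y ^ 2 :=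
    (mul_right_cancel₀ hx (by linear_combination h₀)).symm
  have hlam₁ : lam = c * x ^ 2 + d * y ^ 2 :=
    (mul_right_cancel₀ hy (by linear_combination h₁)).symm
  have key : (a - c) ^ 2 * x ^ 2 = (a - c) * (d - b) * y ^ 2 := by
    linear_combination (a - c) * (hlam₁ - hlam₀)
  have hneg : (a - c) * (d - b) * y ^ 2 < 0 := mul_neg_of_neg_of_pos habcd (by positivity)
  have hnonneg : 0 ≤ (a - c) ^ 2 * x ^ 2 := by positivity
  linarith

lemma eigen_of_fst_eq_zero (hx : x = 0) (hnorm : x ^ 2 + y ^ 2 = 1)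
    (h₁ : c * x ^ 2 * y + d * y ^ 3 = lam * y) : lam = d ∧ (y = 1 ∨ y = -1) := by
  subst hx
  have hy2 : y ^ 2 = 1 := by linear_combination hnorm
  have hy : y ≠ 0 := by rintro rfl; norm_num at hy2
  exact ⟨mul_right_cancel₀ hy (by linear_combination -h₁ + d * y * hy2), sq_eq_one_iff.mp hy2⟩

lemma eigen_of_snd_eq_zero (hy : y = 0) (hnorm : x ^ 2 + y ^ 2 = 1)
    (h₀ : a * x ^ 3 + b * x * y ^ 2 = lam * x) : lam = a ∧ (x = 1 ∨ x = -1) := by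
  subst hy
  have hx2 : x ^ 2 = 1 := by linear_combination hnorm
  have hx : x ≠ 0 := by rintro rfl; norm_num at hx2
  exact ⟨mul_right_cancel₀ hx (by linear_combination -h₀ + a * x * hx2), sq_eq_one_iff.mp hx2⟩

theorem eigen_iff_of_mul_neg (habcd : (a - c) * (d - b) < 0) :
    (x ^ 2 + y ^ 2 = 1 ∧ a * x ^ 3 + b * x * y ^ 2 = lam * x ∧ c * x ^ 2 * y + d * y ^ 3 = lam * y) ↔
      (lam = d ∧ x = 0 ∧ (y = 1 ∨ y = -1)) ∨ (lam = a ∧ (x = 1 ∨ x = -1) ∧ y = 0) := by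
  constructor
  · rintro ⟨hnorm, h₀, h₁⟩
    rcases eq_zero_or_eq_zero_of_eigen habcd h₀ h₁ with hx | hy
    · obtain ⟨hlam, hy⟩ := eigen_of_fst_eq_zero hx hnorm h₁
      exact Or.inl ⟨hlam, hx, hy⟩
    · obtain ⟨hlam, hx⟩ := eigen_of_snd_eq_zero hy hnorm h₀
      exact Or.inr ⟨hlam, hx, hy⟩
  · rintro (⟨rfl, rfl, rfl | rfl⟩ | ⟨rfl, rfl | rfl, rfl⟩) <;> refine ⟨by norm_num, by ring, by ring⟩

end BinaryEigenEquations

lemma isZEigenpair_C0_iff {lam : ℝ} {u : Fin 2 → ℝ} :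
    IsZEigenpair C0 lam u ↔
      (lam = 23 ∧ (u = ![0, 1] ∨ u = ![0, -1])) ∨ (lam = 25.1 ∧ (u = ![1, 0] ∨ u = ![-1, 0])) := by
  simp only [IsZEigenpair, Fin.forall_fin_two, app3_C0, Matrix.cons_val_zero, Matrix.cons_val_one,
    fin_two_eq_vec_iff, ← and_or_left, ← or_and_right]
  refine eigen_iff_of_mul_neg ?_
  norm_num

/-- The set of real Z-eigenvalues of `C0` is exactly `{23, 25.1}`, with Z-eigenvectors
`±(0,1)` for `23` and `±(1,0)` for `25.1`. -/
theorem stmt15 :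
    ({lam : ℝ | ∃ u : Fin 2 → ℝ,
        u 0 ^ 2 + u 1 ^ 2 = 1 ∧ ∀ j, app3 C0 u j = lam * u j} = {23, 25.1}) ∧
    (∀ u : Fin 2 → ℝ,
      (u 0 ^ 2 + u 1 ^ 2 = 1 ∧ ∀ j, app3 C0 u j = 23 * u j) ↔
        (u = ![0, 1] ∨ u = ![0, -1])) ∧
    (∀ u : Fin 2 → ℝ,
      (u 0 ^ 2 + u 1 ^ 2 = 1 ∧ ∀ j, app3 C0 u j = 25.1 * u j) ↔
        (u = ![1, 0] ∨ u = ![-1, 0])) := by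
  refine ⟨?_, fun u => ?_, fun u => ?_⟩
  · ext lam
    change (∃ u, IsZEigenpair C0 lam u) ↔ lam = 23 ∨ lam = 25.1
    simp only [isZEigenpair_C0_iff]
    constructor
    · rintro ⟨u, ⟨rfl, -⟩ | ⟨rfl, -⟩⟩ <;> simp
    · rintro (rfl | rfl)
      · exact ⟨![0, 1], Or.inl ⟨rfl, Or.inl rfl⟩⟩
      · exact ⟨![1, 0], Or.inr ⟨rfl, Or.inl rfl⟩⟩
  · change IsZEigenpair C0 23 u ↔ _
    rw [isZEigenpair_C0_iff]
    norm_num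
  · change IsZEigenpair C0 25.1 u ↔ _
    rw [isZEigenpair_C0_iff]
    norm_num
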